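/- arXiv:1110.3467 — 5 statements merged into one kernel-verified Lean document; each statement's English description precedes it below -/
import Mathlib

section
/- Let u, ω : ℝ³ → ℝ be smooth functions of (t, x, y) satisfying the KP system, and let f : ℝ → ℝ be smooth. Define C¹ = -(1/2)f'u² - (x f'' + (1/2)y² f''')u, C² = (u u_xx + (1/3)u³ - (1/2)u_x² - (1/2)ω²)f' + (x u_xx + (1/2)x u² - u_x)f'' + (1/4)(y²u² + 2y²u_xx - 4xyω)f''' - (1/6)y³ω f⁽⁴⁾, C³ = uω f' + xω f'' + (xyu + (1/2)y²ω)f''' + (1/6)y³u f⁽⁴⁾, where f', f'', f''', f⁽⁴⁾ are derivatives of f evaluated at t. Then D_t(C¹) + D_x(C²) + D_y(C³) = 0 identically, where D_t, D_x, D_y are total derivatives (i.e., partial derivatives of the composite functions of (t,x,y)). -/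
/-- Partial derivative with respect to the first variable `t`. -/
noncomputable def pt (F : ℝ → ℝ → ℝ → ℝ) (t x y : ℝ) : ℝ := deriv (fun s => F s x y) t

/-- Partial derivative with respect to the second variable `x`. -/
noncomputable def px (F : ℝ → ℝ → ℝ → ℝ) (t x y : ℝ) : ℝ := deriv (fun s => F t s y) x

/-- Partial derivative with respect to the third variable `y`. -/
noncomputable def py (F : ℝ → ℝ → ℝ → ℝ) (t x y : ℝ) : ℝ := deriv (fun s => F t x s) y

/-- Smoothness of a function of three real variables. -/
def Smooth3 (F : ℝ → ℝ → ℝ → ℝ) : Prop :=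
  ContDiff ℝ (⊤ : ℕ∞) (fun p : ℝ × ℝ × ℝ => F p.1 p.2.1 p.2.2)

/-- The Kadomtsev-Petviashvili system:
`u_t - u u_x - u_xxx - ω_y = 0`, `ω_x - u_y = 0`. -/
def KPsystem (u ω : ℝ → ℝ → ℝ → ℝ) : Prop :=
  ∀ t x y : ℝ,
    pt u t x y - u t x y * px u t x y - px (px (px u)) t x y - py ω t x y = 0 ∧
    px ω t x y - py u t x y = 0

lemma aux_hasDerivAt_x {F : ℝ → ℝ → ℝ → ℝ} (h : Smooth3 F) (t x y : ℝ) :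
    HasDerivAt (fun s => F t s y)
      (fderiv ℝ (fun p : ℝ × ℝ × ℝ => F p.1 p.2.1 p.2.2) (t, x, y) (0, 1, 0)) x := by
  have hc : HasDerivAt (fun s : ℝ => ((t, s, y) : ℝ × ℝ × ℝ)) ((0:ℝ), (1:ℝ), (0:ℝ)) x :=
    (hasDerivAt_const x t).prodMk ((hasDerivAt_id x).prodMk (hasDerivAt_const x y))
  exact ((h.differentiable (by simp) (t, x, y)).hasFDerivAt.comp_hasDerivAt x hc)

lemma aux_pt_hasDerivAt {F : ℝ → ℝ → ℝ → ℝ} (h : Smooth3 F) (t x y : ℝ) :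
    HasDerivAt (fun s => F s x y) (pt F t x y) t := by
  have hc : HasDerivAt (fun s : ℝ => ((s, x, y) : ℝ × ℝ × ℝ)) ((1:ℝ), (0:ℝ), (0:ℝ)) t :=
    (hasDerivAt_id t).prodMk ((hasDerivAt_const t x).prodMk (hasDerivAt_const t y))
  have H := ((h.differentiable (by simp) (t, x, y)).hasFDerivAt.comp_hasDerivAt t hc)
  exact H.differentiableAt.hasDerivAt

lemma aux_px_hasDerivAt {F : ℝ → ℝ → ℝ → ℝ} (h : Smooth3 F) (t x y : ℝ) :
    HasDerivAt (fun s => F t s y) (px F t x y) x := by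
  simpa [px] using (aux_hasDerivAt_x h t x y).differentiableAt.hasDerivAt

lemma aux_py_hasDerivAt {F : ℝ → ℝ → ℝ → ℝ} (h : Smooth3 F) (t x y : ℝ) :
    HasDerivAt (fun s => F t x s) (py F t x y) y := by
  have hc : HasDerivAt (fun s : ℝ => ((t, x, s) : ℝ × ℝ × ℝ)) ((0:ℝ), (0:ℝ), (1:ℝ)) y :=
    (hasDerivAt_const y t).prodMk ((hasDerivAt_const y x).prodMk (hasDerivAt_id y))
  have H := ((h.differentiable (by simp) (t, x, y)).hasFDerivAt.comp_hasDerivAt y hc)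
  exact H.differentiableAt.hasDerivAt

lemma aux_smooth3_px {F : ℝ → ℝ → ℝ → ℝ} (h : Smooth3 F) : Smooth3 (px F) := by
  have hfd : ContDiff ℝ (⊤ : ℕ∞) (fun p : ℝ × ℝ × ℝ =>
      fderiv ℝ (fun p : ℝ × ℝ × ℝ => F p.1 p.2.1 p.2.2) p ((0:ℝ), (1:ℝ), (0:ℝ))) :=
    (h.fderiv_right (by simp)).clm_apply contDiff_const
  have heq : (fun p : ℝ × ℝ × ℝ => px F p.1 p.2.1 p.2.2) = fun p : ℝ × ℝ × ℝ =>
      fderiv ℝ (fun p : ℝ × ℝ × ℝ => F p.1 p.2.1 p.2.2) p ((0:ℝ), (1:ℝ), (0:ℝ)) := by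
    funext p
    exact (aux_hasDerivAt_x h p.1 p.2.1 p.2.2).deriv
  unfold Smooth3
  rw [heq]
  exact hfd

/-- The conserved vector associated with the symmetry `X_f`
satisfies the conservation equation on solutions of the KP system. -/
theorem conserved_vector_Xf (u ω : ℝ → ℝ → ℝ → ℝ) (f : ℝ → ℝ)
    (hu : Smooth3 u) (hω : Smooth3 ω) (hf : ContDiff ℝ (⊤ : ℕ∞) f)
    (hKP : KPsystem u ω)
    (C1 C2 C3 : ℝ → ℝ → ℝ → ℝ)
    (hC1 : C1 = fun t x y =>
      -(1/2) * deriv f t * (u t x y)^2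
      - (x * deriv (deriv f) t + (1/2) * y^2 * deriv (deriv (deriv f)) t) * u t x y)
    (hC2 : C2 = fun t x y =>
      (u t x y * px (px u) t x y + (1/3) * (u t x y)^3
        - (1/2) * (px u t x y)^2 - (1/2) * (ω t x y)^2) * deriv f t
      + (x * px (px u) t x y + (1/2) * x * (u t x y)^2 - px u t x y) * deriv (deriv f) t
      + (1/4) * (y^2 * (u t x y)^2 + 2 * y^2 * px (px u) t x y - 4 * x * y * ω t x y)
          * deriv (deriv (deriv f)) t
      - (1/6) * y^3 * ω t x y * deriv (deriv (deriv (deriv f))) t)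
    (hC3 : C3 = fun t x y =>
      u t x y * ω t x y * deriv f t + x * ω t x y * deriv (deriv f) t
      + (x * y * u t x y + (1/2) * y^2 * ω t x y) * deriv (deriv (deriv f)) t
      + (1/6) * y^3 * u t x y * deriv (deriv (deriv (deriv f))) t) :
    ∀ t x y : ℝ, pt C1 t x y + px C2 t x y + py C3 t x y = 0 := by
  intro t x y
  obtain ⟨h1, h2⟩ := hKP t x y
  have hux : Smooth3 (px u) := aux_smooth3_px hu
  have huxx : Smooth3 (px (px u)) := aux_smooth3_px hux
  -- derivatives of f
  have key : ∀ g : ℝ → ℝ, ContDiff ℝ (⊤ : ℕ∞) g → ContDiff ℝ (⊤ : ℕ∞) (deriv g) := by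
    intro g hg
    have h := contDiff_succ_iff_deriv (n := ((⊤ : ℕ∞) : WithTop ℕ∞)) (f := g)
    rw [← WithTop.coe_one, ← WithTop.coe_add, top_add] at h
    exact (h.mp hg).2.2
  have hf1 : ContDiff ℝ (⊤ : ℕ∞) (deriv f) := key _ hf
  have hf2 : ContDiff ℝ (⊤ : ℕ∞) (deriv (deriv f)) := key _ hf1
  have hf3 : ContDiff ℝ (⊤ : ℕ∞) (deriv (deriv (deriv f))) := key _ hf2
  have Hf1 : HasDerivAt (deriv f) (deriv (deriv f) t) t :=
    (hf1.differentiable (by simp) t).hasDerivAt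
  have Hf2 : HasDerivAt (deriv (deriv f)) (deriv (deriv (deriv f)) t) t :=
    (hf2.differentiable (by simp) t).hasDerivAt
  have Hf3 : HasDerivAt (deriv (deriv (deriv f))) (deriv (deriv (deriv (deriv f))) t) t :=
    (hf3.differentiable (by simp) t).hasDerivAt
  -- slice derivatives of u and ω
  have Hut : HasDerivAt (fun s => u s x y) (pt u t x y) t := aux_pt_hasDerivAt hu t x y
  have Hu_x : HasDerivAt (fun s => u t s y) (px u t x y) x := aux_px_hasDerivAt hu t x y
  have Hux_x : HasDerivAt (fun s => px u t s y) (px (px u) t x y) x :=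
    aux_px_hasDerivAt hux t x y
  have Huxx_x : HasDerivAt (fun s => px (px u) t s y) (px (px (px u)) t x y) x :=
    aux_px_hasDerivAt huxx t x y
  have Hw_x : HasDerivAt (fun s => ω t s y) (px ω t x y) x := aux_px_hasDerivAt hω t x y
  have Hu_y : HasDerivAt (fun s => u t x s) (py u t x y) y := aux_py_hasDerivAt hu t x y
  have Hw_y : HasDerivAt (fun s => ω t x s) (py ω t x y) y := aux_py_hasDerivAt hω t x y
  -- computing pt C1
  have E1 : pt C1 t x y =
      -(1/2) * deriv (deriv f) t * (u t x y)^2 - deriv f t * u t x y * pt u t x y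
      - (x * deriv (deriv (deriv f)) t + (1/2) * y^2 * deriv (deriv (deriv (deriv f))) t)
          * u t x y
      - (x * deriv (deriv f) t + (1/2) * y^2 * deriv (deriv (deriv f)) t) * pt u t x y := by
    rw [hC1]
    have hh := ((Hf1.const_mul (-(1/2) : ℝ)).mul (Hut.pow 2)).sub
      (((Hf2.const_mul x).add (Hf3.const_mul ((1/2) * y^2))).mul Hut)
    have hgood : HasDerivAt (fun s =>
        -(1/2) * deriv f s * (u s x y)^2
        - (x * deriv (deriv f) s + (1/2) * y^2 * deriv (deriv (deriv f)) s) * u s x y)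
        (-(1/2) * deriv (deriv f) t * (u t x y)^2 - deriv f t * u t x y * pt u t x y
        - (x * deriv (deriv (deriv f)) t + (1/2) * y^2 * deriv (deriv (deriv (deriv f))) t)
            * u t x y
        - (x * deriv (deriv f) t + (1/2) * y^2 * deriv (deriv (deriv f)) t) * pt u t x y) t := by
      refine hh.congr_deriv ?_
      simp only [Pi.pow_apply, Pi.add_apply, Pi.mul_apply, Pi.sub_apply, id_eq]
      push_cast
      ring
    exact hgood.deriv
  -- computing px C2
  have E2 : px C2 t x y =
      (px u t x y * px (px u) t x y + u t x y * px (px (px u)) t x y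
        + (u t x y)^2 * px u t x y - px u t x y * px (px u) t x y
        - ω t x y * px ω t x y) * deriv f t
      + (px (px u) t x y + x * px (px (px u)) t x y + (1/2) * (u t x y)^2
        + x * u t x y * px u t x y - px (px u) t x y) * deriv (deriv f) t
      + (1/4) * (2 * y^2 * u t x y * px u t x y + 2 * y^2 * px (px (px u)) t x y
        - 4 * y * ω t x y - 4 * x * y * px ω t x y) * deriv (deriv (deriv f)) t
      - (1/6) * y^3 * px ω t x y * deriv (deriv (deriv (deriv f))) t := by
    rw [hC2]
    have hA := ((((Hu_x.mul Huxx_x).add ((Hu_x.pow 3).const_mul ((1:ℝ)/3))).sub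
        ((Hux_x.pow 2).const_mul ((1:ℝ)/2))).sub
        ((Hw_x.pow 2).const_mul ((1:ℝ)/2))).mul_const (deriv f t)
    have hB := ((((hasDerivAt_id x).mul Huxx_x).add
        (((hasDerivAt_id x).const_mul ((1:ℝ)/2)).mul (Hu_x.pow 2))).sub Hux_x).mul_const
        (deriv (deriv f) t)
    have hC := (((((Hu_x.pow 2).const_mul (y^2)).add
        (Huxx_x.const_mul (2 * y^2))).sub
        ((((hasDerivAt_id x).const_mul (4:ℝ)).mul_const y).mul Hw_x)).const_mul
        ((1:ℝ)/4)).mul_const (deriv (deriv (deriv f)) t)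
    have hD := (Hw_x.const_mul ((1:ℝ)/6 * y^3)).mul_const (deriv (deriv (deriv (deriv f))) t)
    have hh := ((hA.add hB).add hC).sub hD
    have hgood : HasDerivAt (fun s =>
        (u t s y * px (px u) t s y + (1/3) * (u t s y)^3
          - (1/2) * (px u t s y)^2 - (1/2) * (ω t s y)^2) * deriv f t
        + (s * px (px u) t s y + (1/2) * s * (u t s y)^2 - px u t s y) * deriv (deriv f) t
        + (1/4) * (y^2 * (u t s y)^2 + 2 * y^2 * px (px u) t s y - 4 * s * y * ω t s y)
            * deriv (deriv (deriv f)) t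
        - (1/6) * y^3 * ω t s y * deriv (deriv (deriv (deriv f))) t)
        ((px u t x y * px (px u) t x y + u t x y * px (px (px u)) t x y
          + (u t x y)^2 * px u t x y - px u t x y * px (px u) t x y
          - ω t x y * px ω t x y) * deriv f t
        + (px (px u) t x y + x * px (px (px u)) t x y + (1/2) * (u t x y)^2
          + x * u t x y * px u t x y - px (px u) t x y) * deriv (deriv f) t
        + (1/4) * (2 * y^2 * u t x y * px u t x y + 2 * y^2 * px (px (px u)) t x y
          - 4 * y * ω t x y - 4 * x * y * px ω t x y) * deriv (deriv (deriv f)) t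
        - (1/6) * y^3 * px ω t x y * deriv (deriv (deriv (deriv f))) t) x := by
      refine hh.congr_deriv ?_
      simp only [Pi.pow_apply, Pi.add_apply, Pi.mul_apply, Pi.sub_apply, id_eq]
      push_cast
      ring
    exact hgood.deriv
  -- computing py C3
  have E3 : py C3 t x y =
      (py u t x y * ω t x y + u t x y * py ω t x y) * deriv f t
      + x * py ω t x y * deriv (deriv f) t
      + (x * u t x y + x * y * py u t x y + y * ω t x y
        + (1/2) * y^2 * py ω t x y) * deriv (deriv (deriv f)) t
      + ((1/2) * y^2 * u t x y + (1/6) * y^3 * py u t x y)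
          * deriv (deriv (deriv (deriv f))) t := by
    rw [hC3]
    have hA := (Hu_y.mul Hw_y).mul_const (deriv f t)
    have hB := (Hw_y.const_mul x).mul_const (deriv (deriv f) t)
    have hC := ((((hasDerivAt_id y).const_mul x).mul Hu_y).add
        (((hasDerivAt_pow 2 y).const_mul ((1:ℝ)/2)).mul Hw_y)).mul_const
        (deriv (deriv (deriv f)) t)
    have hD := (((hasDerivAt_pow 3 y).const_mul ((1:ℝ)/6)).mul Hu_y).mul_const
        (deriv (deriv (deriv (deriv f))) t)
    have hh := ((hA.add hB).add hC).add hD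
    have hgood : HasDerivAt (fun s =>
        u t x s * ω t x s * deriv f t + x * ω t x s * deriv (deriv f) t
        + (x * s * u t x s + (1/2) * s^2 * ω t x s) * deriv (deriv (deriv f)) t
        + (1/6) * s^3 * u t x s * deriv (deriv (deriv (deriv f))) t)
        ((py u t x y * ω t x y + u t x y * py ω t x y) * deriv f t
        + x * py ω t x y * deriv (deriv f) t
        + (x * u t x y + x * y * py u t x y + y * ω t x y
          + (1/2) * y^2 * py ω t x y) * deriv (deriv (deriv f)) t
        + ((1/2) * y^2 * u t x y + (1/6) * y^3 * py u t x y)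
            * deriv (deriv (deriv (deriv f))) t) y := by
      refine hh.congr_deriv ?_
      simp only [Pi.pow_apply, Pi.add_apply, Pi.mul_apply, Pi.sub_apply, id_eq]
      push_cast
      ring
    exact hgood.deriv
  rw [E1, E2, E3]
  linear_combination
    (-(u t x y * deriv f t + x * deriv (deriv f) t
        + (1/2) * y^2 * deriv (deriv (deriv f)) t)) * h1
    + (-(ω t x y * deriv f t + x * y * deriv (deriv (deriv f)) t
        + (1/6) * y^3 * deriv (deriv (deriv (deriv f))) t)) * h2
end

section
/- Let u, ω : ℝ³ → ℝ be arbitrary smooth functions of (t, x, y) (not assumed to solve any equation), and let f : ℝ → ℝ be smooth. With C¹ = -(1/2)f'u² - (x f'' + (1/2)y² f''')u, C² = (u u_xx + (1/3)u³ - (1/2)u_x² - (1/2)ω²)f' + (x u_xx + (1/2)x u² - u_x)f'' + (1/4)(y²u² + 2y²u_xx - 4xyω)f''' - (1/6)y³ω f⁽⁴⁾, C³ = uω f' + xω f'' + (xyu + (1/2)y²ω)f''' + (1/6)y³u f⁽⁴⁾ (derivatives of f evaluated at t), the following identity holds pointwise: D_t(C¹) + D_x(C²) + D_y(C³) = (u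 f' + x f'' + (1/2)y² f''')·(u_xxx + u·u_x + ω_y - u_t) + (ω f' + xy f''' + (1/6)y³ f⁽⁴⁾)·(u_y - ω_x). -/
lemma slice_t {F : ℝ → ℝ → ℝ → ℝ} (hF : Smooth3 F) (t x y : ℝ) :
    HasDerivAt (fun s => F s x y) (pt F t x y) t := by
  have hline : Differentiable ℝ (fun s : ℝ => ((s, x, y) : ℝ × ℝ × ℝ)) :=
    differentiable_id.prodMk ((differentiable_const _).prodMk (differentiable_const _))
  exact (((hF.differentiable (by simp)).comp hline) t).hasDerivAt

lemma slice_x {F : ℝ → ℝ → ℝ → ℝ} (hF : Smooth3 F) (t x y : ℝ) :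
    HasDerivAt (fun s => F t s y) (px F t x y) x := by
  have hline : Differentiable ℝ (fun s : ℝ => ((t, s, y) : ℝ × ℝ × ℝ)) :=
    (differentiable_const _).prodMk (differentiable_id.prodMk (differentiable_const _))
  exact (((hF.differentiable (by simp)).comp hline) x).hasDerivAt

lemma slice_y {F : ℝ → ℝ → ℝ → ℝ} (hF : Smooth3 F) (t x y : ℝ) :
    HasDerivAt (fun s => F t x s) (py F t x y) y := by
  have hline : Differentiable ℝ (fun s : ℝ => ((t, x, s) : ℝ × ℝ × ℝ)) :=
    (differentiable_const _).prodMk ((differentiable_const _).prodMk differentiable_id)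
  exact (((hF.differentiable (by simp)).comp hline) y).hasDerivAt

lemma smooth3_px {F : ℝ → ℝ → ℝ → ℝ} (hF : Smooth3 F) : Smooth3 (px F) := by
  have key : ∀ p : ℝ × ℝ × ℝ, px F p.1 p.2.1 p.2.2
      = fderiv ℝ (fun q : ℝ × ℝ × ℝ => F q.1 q.2.1 q.2.2) p (0, 1, 0) := by
    rintro ⟨t, x, y⟩
    have hL : HasDerivAt (fun s : ℝ => ((t, s, y) : ℝ × ℝ × ℝ)) ((0 : ℝ), (1 : ℝ), (0 : ℝ)) x :=
      (hasDerivAt_const x t).prodMk ((hasDerivAt_id x).prodMk (hasDerivAt_const x y))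
    have hG := ((hF.differentiable (by simp)) (t, x, y)).hasFDerivAt
    exact (hG.comp_hasDerivAt x hL).deriv
  have heq : (fun p : ℝ × ℝ × ℝ => px F p.1 p.2.1 p.2.2)
      = fun p => fderiv ℝ (fun q : ℝ × ℝ × ℝ => F q.1 q.2.1 q.2.2) p (0, 1, 0) :=
    funext key
  rw [Smooth3, heq]
  exact (hF.fderiv_right (by simp)).clm_apply contDiff_const

lemma contDiff_deriv_of_top {f : ℝ → ℝ} (hf : ContDiff ℝ (⊤ : ℕ∞) f) : ContDiff ℝ (⊤ : ℕ∞) (deriv f) := by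
  have h := (hf.fderiv_right (m := ((⊤ : ℕ∞) : WithTop ℕ∞)) (by simp)).clm_apply
    (contDiff_const (c := (1 : ℝ)))
  have : (fun x => fderiv ℝ f x 1) = deriv f := funext fun x => fderiv_apply_one_eq_deriv
  rwa [this] at h


/-- The divergence identity (26) for the conserved vector of `X_f`,
valid for arbitrary smooth `u`, `ω`. -/
theorem divergence_identity_Xf (u ω : ℝ → ℝ → ℝ → ℝ) (f : ℝ → ℝ)
    (hu : Smooth3 u) (hω : Smooth3 ω) (hf : ContDiff ℝ (⊤ : ℕ∞) f)
    (C1 C2 C3 : ℝ → ℝ → ℝ → ℝ)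
    (hC1 : C1 = fun t x y =>
      -(1/2) * deriv f t * (u t x y)^2
      - (x * deriv (deriv f) t + (1/2) * y^2 * deriv (deriv (deriv f)) t) * u t x y)
    (hC2 : C2 = fun t x y =>
      (u t x y * px (px u) t x y + (1/3) * (u t x y)^3
        - (1/2) * (px u t x y)^2 - (1/2) * (ω t x y)^2) * deriv f t
      + (x * px (px u) t x y + (1/2) * x * (u t x y)^2 - px u t x y) * deriv (deriv f) t
      + (1/4) * (y^2 * (u t x y)^2 + 2 * y^2 * px (px u) t x y - 4 * x * y * ω t x y)
          * deriv (deriv (deriv f)) t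
      - (1/6) * y^3 * ω t x y * deriv (deriv (deriv (deriv f))) t)
    (hC3 : C3 = fun t x y =>
      u t x y * ω t x y * deriv f t + x * ω t x y * deriv (deriv f) t
      + (x * y * u t x y + (1/2) * y^2 * ω t x y) * deriv (deriv (deriv f)) t
      + (1/6) * y^3 * u t x y * deriv (deriv (deriv (deriv f))) t) :
    ∀ t x y : ℝ,
      pt C1 t x y + px C2 t x y + py C3 t x y
        = (u t x y * deriv f t + x * deriv (deriv f) t
            + (1/2) * y^2 * deriv (deriv (deriv f)) t)
            * (px (px (px u)) t x y + u t x y * px u t x y + py ω t x y - pt u t x y)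
        + (ω t x y * deriv f t + x * y * deriv (deriv (deriv f)) t
            + (1/6) * y^3 * deriv (deriv (deriv (deriv f))) t)
            * (py u t x y - px ω t x y) := by
  subst hC1 hC2 hC3
  intro t x y
  have hf1 : ContDiff ℝ (⊤ : ℕ∞) (deriv f) := contDiff_deriv_of_top hf
  have hf2 : ContDiff ℝ (⊤ : ℕ∞) (deriv (deriv f)) := contDiff_deriv_of_top hf1
  have hf3 : ContDiff ℝ (⊤ : ℕ∞) (deriv (deriv (deriv f))) := contDiff_deriv_of_top hf2
  have hd1 : HasDerivAt (deriv f) (deriv (deriv f) t) t :=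
    ((hf1.differentiable (by simp)) t).hasDerivAt
  have hd2 : HasDerivAt (deriv (deriv f)) (deriv (deriv (deriv f)) t) t :=
    ((hf2.differentiable (by simp)) t).hasDerivAt
  have hd3 : HasDerivAt (deriv (deriv (deriv f))) (deriv (deriv (deriv (deriv f))) t) t :=
    ((hf3.differentiable (by simp)) t).hasDerivAt
  have hupx : Smooth3 (px u) := smooth3_px hu
  have hupxx : Smooth3 (px (px u)) := smooth3_px hupx
  have hUt : HasDerivAt (fun s => u s x y) (pt u t x y) t := slice_t hu t x y
  have hU : HasDerivAt (fun s => u t s y) (px u t x y) x := slice_x hu t x y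
  have hUx : HasDerivAt (fun s => px u t s y) (px (px u) t x y) x := slice_x hupx t x y
  have hUxx : HasDerivAt (fun s => px (px u) t s y) (px (px (px u)) t x y) x :=
    slice_x hupxx t x y
  have hW : HasDerivAt (fun s => ω t s y) (px ω t x y) x := slice_x hω t x y
  have hUy : HasDerivAt (fun s => u t x s) (py u t x y) y := slice_y hu t x y
  have hWy : HasDerivAt (fun s => ω t x s) (py ω t x y) y := slice_y hω t x y
  have H1 := ((hd1.const_mul (-(1/2) : ℝ)).mul (hUt.pow 2)).sub
    (((hd2.const_mul x).add (hd3.const_mul ((1/2) * y^2))).mul hUt)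
  have h2a := ((((hU.mul hUxx).add ((hU.pow 3).const_mul (1/3))).sub
      ((hUx.pow 2).const_mul (1/2))).sub ((hW.pow 2).const_mul (1/2))).mul_const (deriv f t)
  have h2b := (((hasDerivAt_id' (x := x)).mul hUxx).add
      (((hasDerivAt_id' (x := x)).const_mul (1/2)).mul (hU.pow 2))).sub hUx
  have h2b' := h2b.mul_const (deriv (deriv f) t)
  have h2c := (((((hU.pow 2).const_mul (y^2)).add (hUxx.const_mul (2 * y^2))).sub
      ((((hasDerivAt_id' (x := x)).const_mul 4).mul_const y).mul hW)).const_mul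
      (1/4)).mul_const (deriv (deriv (deriv f)) t)
  have h2d := (hW.const_mul ((1/6) * y^3)).mul_const (deriv (deriv (deriv (deriv f))) t)
  have H2 := ((h2a.add h2b').add h2c).sub h2d
  have h3a := (hUy.mul hWy).mul_const (deriv f t)
  have h3b := (hWy.const_mul x).mul_const (deriv (deriv f) t)
  have h3c := ((((hasDerivAt_id' (x := y)).const_mul x).mul hUy).add
      (((hasDerivAt_pow 2 y).const_mul (1/2)).mul hWy)).mul_const (deriv (deriv (deriv f)) t)
  have h3d := (((hasDerivAt_pow 3 y).const_mul (1/6)).mul hUy).mul_const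
      (deriv (deriv (deriv (deriv f))) t)
  have H3 := ((h3a.add h3b).add h3c).add h3d
  have e1 : pt (fun t x y =>
      -(1/2) * deriv f t * (u t x y)^2
      - (x * deriv (deriv f) t + (1/2) * y^2 * deriv (deriv (deriv f)) t) * u t x y) t x y
      = _ := H1.deriv
  have e2 : px (fun t x y =>
      (u t x y * px (px u) t x y + (1/3) * (u t x y)^3
        - (1/2) * (px u t x y)^2 - (1/2) * (ω t x y)^2) * deriv f t
      + (x * px (px u) t x y + (1/2) * x * (u t x y)^2 - px u t x y) * deriv (deriv f) t
      + (1/4) * (y^2 * (u t x y)^2 + 2 * y^2 * px (px u) t x y - 4 * x * y * ω t x y)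
          * deriv (deriv (deriv f)) t
      - (1/6) * y^3 * ω t x y * deriv (deriv (deriv (deriv f))) t) t x y
      = _ := H2.deriv
  have e3 : py (fun t x y =>
      u t x y * ω t x y * deriv f t + x * ω t x y * deriv (deriv f) t
      + (x * y * u t x y + (1/2) * y^2 * ω t x y) * deriv (deriv (deriv f)) t
      + (1/6) * y^3 * u t x y * deriv (deriv (deriv (deriv f))) t) t x y
      = _ := H3.deriv
  rw [e1, e2, e3]
  simp only [Pi.pow_apply, Pi.add_apply, Pi.mul_apply]
  ring
end

section
/- Let u, ω : ℝ³ → ℝ be smooth functions of (t, x, y) satisfying the KP system, and let g : ℝ → ℝ be smooth. Define C¹ = y u g'', C² = (xω - y u_xx - (1/2)y u²)g'' + (1/2)y²ω g''', C³ = -(xu + yω)g'' - (1/2)y²u g''', where g'', g''' are derivatives of g evaluated at t. Then D_t(C¹) + D_x(C²) + D_y(C³) = 0 identically. -/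
lemma sectT {F : ℝ → ℝ → ℝ → ℝ}
    (hF : ContDiff ℝ (⊤ : ℕ∞) (fun p : ℝ × ℝ × ℝ => F p.1 p.2.1 p.2.2)) (x y : ℝ) :
    ContDiff ℝ (⊤ : ℕ∞) (fun s : ℝ => F s x y) := by
  exact hF.comp (contDiff_id.prodMk (contDiff_const (c := ((x, y) : ℝ × ℝ))))

lemma sectX {F : ℝ → ℝ → ℝ → ℝ}
    (hF : ContDiff ℝ (⊤ : ℕ∞) (fun p : ℝ × ℝ × ℝ => F p.1 p.2.1 p.2.2)) (t y : ℝ) :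
    ContDiff ℝ (⊤ : ℕ∞) (fun s : ℝ => F t s y) := by
  exact hF.comp ((contDiff_const (c := t)).prodMk (contDiff_id.prodMk (contDiff_const (c := y))))

lemma sectY {F : ℝ → ℝ → ℝ → ℝ}
    (hF : ContDiff ℝ (⊤ : ℕ∞) (fun p : ℝ × ℝ × ℝ => F p.1 p.2.1 p.2.2)) (t x : ℝ) :
    ContDiff ℝ (⊤ : ℕ∞) (fun s : ℝ => F t x s) := by
  exact hF.comp ((contDiff_const (c := t)).prodMk ((contDiff_const (c := x)).prodMk contDiff_id))

lemma pxEq {F : ℝ → ℝ → ℝ → ℝ}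
    (hF : ContDiff ℝ (⊤ : ℕ∞) (fun p : ℝ × ℝ × ℝ => F p.1 p.2.1 p.2.2)) (t x y : ℝ) :
    deriv (fun s => F t s y) x
      = fderiv ℝ (fun p : ℝ × ℝ × ℝ => F p.1 p.2.1 p.2.2) (t, x, y) (0, 1, 0) := by
  have hL : HasDerivAt (fun s : ℝ => ((t, s, y) : ℝ × ℝ × ℝ)) (0, 1, 0) x :=
    (hasDerivAt_const x t).prodMk ((hasDerivAt_id x).prodMk (hasDerivAt_const x y))
  exact (((hF.differentiable (by simp)) (t, x, y)).hasFDerivAt.comp_hasDerivAt x hL).deriv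

lemma smoothPX {F : ℝ → ℝ → ℝ → ℝ}
    (hF : ContDiff ℝ (⊤ : ℕ∞) (fun p : ℝ × ℝ × ℝ => F p.1 p.2.1 p.2.2)) :
    ContDiff ℝ (⊤ : ℕ∞) (fun p : ℝ × ℝ × ℝ => deriv (fun s => F p.1 s p.2.2) p.2.1) := by
  have : (fun p : ℝ × ℝ × ℝ => deriv (fun s => F p.1 s p.2.2) p.2.1)
      = fun p : ℝ × ℝ × ℝ =>
        fderiv ℝ (fun q : ℝ × ℝ × ℝ => F q.1 q.2.1 q.2.2) p (0, 1, 0) := by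
    funext p
    exact pxEq hF p.1 p.2.1 p.2.2
  rw [this]
  exact (hF.fderiv_right (by simp)).clm_apply contDiff_const

/-- The conserved vector associated with the symmetry `X_g`
satisfies the conservation equation on solutions of the KP system. -/
theorem conserved_vector_Xg (u ω : ℝ → ℝ → ℝ → ℝ) (g : ℝ → ℝ)
    (hu : Smooth3 u) (hω : Smooth3 ω) (hg : ContDiff ℝ (⊤ : ℕ∞) g)
    (hKP : KPsystem u ω)
    (C1 C2 C3 : ℝ → ℝ → ℝ → ℝ)
    (hC1 : C1 = fun t x y => y * u t x y * deriv (deriv g) t)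
    (hC2 : C2 = fun t x y =>
      (x * ω t x y - y * px (px u) t x y - (1/2) * y * (u t x y)^2) * deriv (deriv g) t
      + (1/2) * y^2 * ω t x y * deriv (deriv (deriv g)) t)
    (hC3 : C3 = fun t x y =>
      -(x * u t x y + y * ω t x y) * deriv (deriv g) t
      - (1/2) * y^2 * u t x y * deriv (deriv (deriv g)) t) :
    ∀ t x y : ℝ, pt C1 t x y + px C2 t x y + py C3 t x y = 0 := by
  intro t x y
  have huxx : Smooth3 (px (px u)) := smooth3_px (smooth3_px hu)
  -- g'' smoothness
  have hg2 : ContDiff ℝ ((⊤ : ℕ∞) : WithTop ℕ∞) (deriv (deriv g)) :=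
    (contDiff_infty_iff_deriv.mp
      (contDiff_infty_iff_deriv.mp (hg.of_le (by simp))).2).2
  have hg2' : Differentiable ℝ (deriv (deriv g)) :=
    (contDiff_infty_iff_deriv.mp (contDiff_infty_iff_deriv.mp
      (contDiff_infty_iff_deriv.mp (hg.of_le (by simp))).2).2).1
  -- t-direction derivatives
  have hut : HasDerivAt (fun s => u s x y) (pt u t x y) t :=
    ((sectT hu x y).differentiable (by simp) t).hasDerivAt
  have hg3 : HasDerivAt (fun s => deriv (deriv g) s) (deriv (deriv (deriv g)) t) t :=
    (hg2' t).hasDerivAt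
  -- x-direction derivatives
  have hux : HasDerivAt (fun s => u t s y) (px u t x y) x :=
    ((sectX hu t y).differentiable (by simp) x).hasDerivAt
  have hwx : HasDerivAt (fun s => ω t s y) (px ω t x y) x :=
    ((sectX hω t y).differentiable (by simp) x).hasDerivAt
  have huxxx : HasDerivAt (fun s => px (px u) t s y) (px (px (px u)) t x y) x :=
    ((sectX huxx t y).differentiable (by simp) x).hasDerivAt
  -- y-direction derivatives
  have huy : HasDerivAt (fun s => u t x s) (py u t x y) y :=
    ((sectY hu t x).differentiable (by simp) y).hasDerivAt
  have hwy : HasDerivAt (fun s => ω t x s) (py ω t x y) y :=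
    ((sectY hω t x).differentiable (by simp) y).hasDerivAt
  subst hC1 hC2 hC3
  have e1 : deriv (fun s => y * u s x y * deriv (deriv g) s) t
      = (y * pt u t x y) * deriv (deriv g) t
        + (y * u t x y) * deriv (deriv (deriv g)) t :=
    ((hut.const_mul y).mul hg3).deriv
  have e2 : deriv (fun s =>
        (s * ω t s y - y * px (px u) t s y - (1/2) * y * (u t s y)^2) * deriv (deriv g) t
        + (1/2) * y^2 * ω t s y * deriv (deriv (deriv g)) t) x
      = ((1 * ω t x y + x * px ω t x y) - y * px (px (px u)) t x y
          - (1/2) * y * (2 * u t x y ^ 1 * px u t x y)) * deriv (deriv g) t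
        + ((1/2) * y^2 * px ω t x y) * deriv (deriv (deriv g)) t := by
    exact ((((((hasDerivAt_id x).mul hwx).sub (huxxx.const_mul y)).sub
      ((hux.pow 2).const_mul ((1/2) * y))).mul_const (deriv (deriv g) t)).add
      ((hwx.const_mul ((1/2) * y^2)).mul_const (deriv (deriv (deriv g)) t))).deriv
  have e3 : deriv (fun s =>
        -(x * u t x s + s * ω t x s) * deriv (deriv g) t
        - (1/2) * s^2 * u t x s * deriv (deriv (deriv g)) t) y
      = (-(x * py u t x y + (1 * ω t x y + y * py ω t x y))) * deriv (deriv g) t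
        - (((1/2) * (2 * y ^ 1 * 1)) * u t x y + (1/2) * y^2 * py u t x y)
            * deriv (deriv (deriv g)) t := by
    exact ((((huy.const_mul x).add ((hasDerivAt_id y).mul hwy)).neg.mul_const
      (deriv (deriv g) t)).sub
      (((((hasDerivAt_id y).pow 2).const_mul ((1:ℝ)/2)).mul huy).mul_const
        (deriv (deriv (deriv g)) t))).deriv
  obtain ⟨h1, h2⟩ := hKP t x y
  simp only [pt, px, py] at e1 e2 e3 h1 h2 ⊢
  rw [e1, e2, e3]
  linear_combination (y * deriv (deriv g) t) * h1
    + (x * deriv (deriv g) t + (1/2) * y^2 * deriv (deriv (deriv g)) t) * h2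
end

section
/- Let u, ω : ℝ³ → ℝ be arbitrary smooth functions of (t, x, y) and let g : ℝ → ℝ be smooth. With C¹ = y u g'', C² = (xω - y u_xx - (1/2)y u²)g'' + (1/2)y²ω g''', C³ = -(xu + yω)g'' - (1/2)y²u g''' (derivatives of g evaluated at t), the following identity holds pointwise: D_t(C¹) + D_x(C²) + D_y(C³) = g''·( y(u_t - u·u_x - u_xxx - ω_y) + x(ω_x - u_y) ) + (1/2)y² g'''·(ω_x - u_y). -/
lemma sliceT {F : ℝ → ℝ → ℝ → ℝ} (hF : Smooth3 F) (x y : ℝ) :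
    ContDiff ℝ (⊤ : ℕ∞) (fun s : ℝ => F s x y) :=
  hF.comp (contDiff_id.prodMk (contDiff_const.prodMk contDiff_const))

lemma sliceX {F : ℝ → ℝ → ℝ → ℝ} (hF : Smooth3 F) (t y : ℝ) :
    ContDiff ℝ (⊤ : ℕ∞) (fun s : ℝ => F t s y) :=
  hF.comp (contDiff_const.prodMk (contDiff_id.prodMk contDiff_const))

lemma sliceY {F : ℝ → ℝ → ℝ → ℝ} (hF : Smooth3 F) (t x : ℝ) :
    ContDiff ℝ (⊤ : ℕ∞) (fun s : ℝ => F t x s) :=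
  hF.comp (contDiff_const.prodMk (contDiff_const.prodMk contDiff_id))

/-- The divergence identity for the conserved vector of `X_g`,
valid for arbitrary smooth `u`, `ω`. -/
theorem divergence_identity_Xg (u ω : ℝ → ℝ → ℝ → ℝ) (g : ℝ → ℝ)
    (hu : Smooth3 u) (hω : Smooth3 ω) (hg : ContDiff ℝ (⊤ : ℕ∞) g)
    (C1 C2 C3 : ℝ → ℝ → ℝ → ℝ)
    (hC1 : C1 = fun t x y => y * u t x y * deriv (deriv g) t)
    (hC2 : C2 = fun t x y =>
      (x * ω t x y - y * px (px u) t x y - (1/2) * y * (u t x y)^2) * deriv (deriv g) t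
      + (1/2) * y^2 * ω t x y * deriv (deriv (deriv g)) t)
    (hC3 : C3 = fun t x y =>
      -(x * u t x y + y * ω t x y) * deriv (deriv g) t
      - (1/2) * y^2 * u t x y * deriv (deriv (deriv g)) t) :
    ∀ t x y : ℝ,
      pt C1 t x y + px C2 t x y + py C3 t x y
        = deriv (deriv g) t *
            (y * (pt u t x y - u t x y * px u t x y - px (px (px u)) t x y - py ω t x y)
              + x * (px ω t x y - py u t x y))
        + (1/2) * y^2 * deriv (deriv (deriv g)) t * (px ω t x y - py u t x y) := by
  intro t x y
  -- smoothness of derivatives of g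
  have hg' : ContDiff ℝ (⊤ : ℕ∞) g := hg.of_le (by simp)
  have hg1 : ContDiff ℝ (⊤ : ℕ∞) (deriv g) := (contDiff_infty_iff_deriv.mp hg').2
  have hg2 : ContDiff ℝ (⊤ : ℕ∞) (deriv (deriv g)) := (contDiff_infty_iff_deriv.mp hg1).2
  have hG2 : HasDerivAt (deriv (deriv g)) (deriv (deriv (deriv g)) t) t :=
    ((contDiff_infty_iff_deriv.mp hg2).1 t).hasDerivAt
  -- slices
  have hut : ContDiff ℝ (⊤ : ℕ∞) (fun s : ℝ => u s x y) := (sliceT hu x y).of_le (by simp)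
  have hux : ContDiff ℝ (⊤ : ℕ∞) (fun s : ℝ => u t s y) := (sliceX hu t y).of_le (by simp)
  have huy : ContDiff ℝ (⊤ : ℕ∞) (fun s : ℝ => u t x s) := (sliceY hu t x).of_le (by simp)
  have hωx : ContDiff ℝ (⊤ : ℕ∞) (fun s : ℝ => ω t s y) := (sliceX hω t y).of_le (by simp)
  have hωy : ContDiff ℝ (⊤ : ℕ∞) (fun s : ℝ => ω t x s) := (sliceY hω t x).of_le (by simp)
  have hux1 : ContDiff ℝ (⊤ : ℕ∞) (deriv (fun s : ℝ => u t s y)) := (contDiff_infty_iff_deriv.mp hux).2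
  have hux2 : ContDiff ℝ (⊤ : ℕ∞) (deriv (deriv (fun s : ℝ => u t s y))) :=
    (contDiff_infty_iff_deriv.mp hux1).2
  -- basic HasDerivAt facts
  have Hut : HasDerivAt (fun s : ℝ => u s x y) (pt u t x y) t :=
    ((contDiff_infty_iff_deriv.mp hut).1 t).hasDerivAt
  have Hux : HasDerivAt (fun s : ℝ => u t s y) (px u t x y) x :=
    ((contDiff_infty_iff_deriv.mp hux).1 x).hasDerivAt
  have Huy : HasDerivAt (fun s : ℝ => u t x s) (py u t x y) y :=
    ((contDiff_infty_iff_deriv.mp huy).1 y).hasDerivAt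
  have Hωx : HasDerivAt (fun s : ℝ => ω t s y) (px ω t x y) x :=
    ((contDiff_infty_iff_deriv.mp hωx).1 x).hasDerivAt
  have Hωy : HasDerivAt (fun s : ℝ => ω t x s) (py ω t x y) y :=
    ((contDiff_infty_iff_deriv.mp hωy).1 y).hasDerivAt
  have Hux3 : HasDerivAt (deriv (deriv (fun s : ℝ => u t s y))) (px (px (px u)) t x y) x :=
    ((contDiff_infty_iff_deriv.mp hux2).1 x).hasDerivAt
  -- the three divergence pieces
  have E1 : pt C1 t x y
      = y * pt u t x y * deriv (deriv g) t + y * u t x y * deriv (deriv (deriv g)) t := by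
    rw [hC1]
    exact ((Hut.const_mul y).mul hG2).deriv
  have E2 : px C2 t x y
      = (1 * ω t x y + x * px ω t x y - y * px (px (px u)) t x y
          - 1/2 * y * ((2:ℕ) * u t x y ^ 1 * px u t x y)) * deriv (deriv g) t
        + (1/2 * y^2 * px ω t x y) * deriv (deriv (deriv g)) t := by
    rw [hC2]
    exact ((((((hasDerivAt_id x).mul Hωx).sub (Hux3.const_mul y)).sub
      ((Hux.pow 2).const_mul (1/2 * y))).mul_const (deriv (deriv g) t)).add
      ((Hωx.const_mul (1/2 * y^2)).mul_const (deriv (deriv (deriv g)) t))).deriv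
  have E3 : py C3 t x y
      = -(x * py u t x y + (1 * ω t x y + y * py ω t x y)) * deriv (deriv g) t
        - (1/2 * ((2:ℕ) * y ^ 1) * u t x y + 1/2 * y^2 * py u t x y)
            * deriv (deriv (deriv g)) t := by
    rw [hC3]
    exact (((((Huy.const_mul x).add ((hasDerivAt_id y).mul Hωy)).neg).mul_const
      (deriv (deriv g) t)).sub
      ((((hasDerivAt_pow 2 y).const_mul (1/2)).mul Huy).mul_const
        (deriv (deriv (deriv g)) t))).deriv
  rw [E1, E2, E3]
  push_cast
  ring
end

section
/- (Finite form of the symmetry X_g of the KP system.) Let u, ω : ℝ³ → ℝ be smooth functions of (t, x, y) satisfying the KP system, let g : ℝ → ℝ be smooth, and let ε ∈ ℝ. Define X(t,x,y) = x - ε g'(t) y + ε² g(t) g'(t) and Y(t,y) = y - 2ε g(t), and set ũ(t, x, y) = u(t, X, Y) - ε g''(t) y + ε² g(t) g''(t), ω̃(t, x, y) = ω(t, X, Y) - ε·( g'(t)·u(t, X, Y) + g''(t)·X + (1/2) g'''(t)·Y² ) - ε² g(t) g'''(t)·Y - (2/3) ε³ g(t)² g'''(t). Then (ũ, ω̃)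 also satisfies the KP system: ũ_t - ũ·ũ_x - ũ_xxx - ω̃_y = 0 and ω̃_x - ũ_y = 0. -/
noncomputable def unc (F : ℝ → ℝ → ℝ → ℝ) : ℝ × ℝ × ℝ → ℝ := fun p => F p.1 p.2.1 p.2.2

lemma pt_eq (F : ℝ → ℝ → ℝ → ℝ) (hF : Smooth3 F) (t x y : ℝ) :
    pt F t x y = fderiv ℝ (unc F) (t,x,y) (1,0,0) := by
  have h1 : HasDerivAt (fun s : ℝ => ((s,x,y) : ℝ×ℝ×ℝ)) ((1:ℝ),(0:ℝ),(0:ℝ)) t :=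
    (hasDerivAt_id t).prodMk ((hasDerivAt_const t x).prodMk (hasDerivAt_const t y))
  have h2 := ((hF.differentiable (by simp)) (t,x,y)).hasFDerivAt
  have h3 := h2.comp_hasDerivAt t h1
  exact h3.deriv

lemma px_eq (F : ℝ → ℝ → ℝ → ℝ) (hF : Smooth3 F) (t x y : ℝ) :
    px F t x y = fderiv ℝ (unc F) (t,x,y) (0,1,0) := by
  have h1 : HasDerivAt (fun s : ℝ => ((t,s,y) : ℝ×ℝ×ℝ)) ((0:ℝ),(1:ℝ),(0:ℝ)) x :=
    (hasDerivAt_const x t).prodMk ((hasDerivAt_id' (x := x)).prodMk (hasDerivAt_const x y))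
  have h2 := ((hF.differentiable (by simp)) (t,x,y)).hasFDerivAt
  exact (h2.comp_hasDerivAt x h1).deriv

lemma py_eq (F : ℝ → ℝ → ℝ → ℝ) (hF : Smooth3 F) (t x y : ℝ) :
    py F t x y = fderiv ℝ (unc F) (t,x,y) (0,0,1) := by
  have h1 : HasDerivAt (fun s : ℝ => ((t,x,s) : ℝ×ℝ×ℝ)) ((0:ℝ),(0:ℝ),(1:ℝ)) y :=
    (hasDerivAt_const y t).prodMk ((hasDerivAt_const y x).prodMk (hasDerivAt_id' (x := y)))
  have h2 := ((hF.differentiable (by simp)) (t,x,y)).hasFDerivAt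
  exact (h2.comp_hasDerivAt y h1).deriv

lemma smooth_px (F : ℝ → ℝ → ℝ → ℝ) (hF : Smooth3 F) : Smooth3 (px F) := by
  have h : (fun p : ℝ×ℝ×ℝ => px F p.1 p.2.1 p.2.2)
      = fun p => (fderiv ℝ (unc F) p) (0,1,0) := by
    funext p
    exact px_eq F hF p.1 p.2.1 p.2.2
  rw [Smooth3, h]
  exact (ContinuousLinearMap.apply ℝ ℝ ((0:ℝ),(1:ℝ),(0:ℝ))).contDiff.comp
    (hF.fderiv_right (by simp))

lemma hasDerivAt_comp3 (F : ℝ → ℝ → ℝ → ℝ) (hF : Smooth3 F)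
    {f g h : ℝ → ℝ} {f' g' h' s : ℝ}
    (hf : HasDerivAt f f' s) (hg : HasDerivAt g g' s) (hh : HasDerivAt h h' s) :
    HasDerivAt (fun r => F (f r) (g r) (h r))
      (f' * pt F (f s) (g s) (h s) + g' * px F (f s) (g s) (h s)
        + h' * py F (f s) (g s) (h s)) s := by
  have h1 : HasDerivAt (fun r => ((f r, g r, h r) : ℝ×ℝ×ℝ)) (f', g', h') s :=
    hf.prodMk (hg.prodMk hh)
  have h2 := ((hF.differentiable (by simp)) (f s, g s, h s)).hasFDerivAt
  have h3 := h2.comp_hasDerivAt s h1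
  have h4 : ((f' , g', h') : ℝ×ℝ×ℝ)
      = f' • ((1:ℝ),(0:ℝ),(0:ℝ)) + g' • ((0:ℝ),(1:ℝ),(0:ℝ)) + h' • ((0:ℝ),(0:ℝ),(1:ℝ)) := by
    simp [Prod.ext_iff]
  rw [pt_eq F hF, px_eq F hF, py_eq F hF]
  refine h3.congr_deriv ?_
  rw [h4, map_add, map_add, map_smul, map_smul, map_smul]
  simp only [unc, smul_eq_mul]
  rfl

/-- Finite form of the symmetry `X_g` with group parameter `ε`:
the indicated transformation takes solutions of the KP system to solutions. -/
theorem finite_symmetry_Xg (u ω : ℝ → ℝ → ℝ → ℝ) (g : ℝ → ℝ) (ε : ℝ)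
    (hu : Smooth3 u) (hω : Smooth3 ω) (hg : ContDiff ℝ (⊤ : ℕ∞) g)
    (hKP : KPsystem u ω)
    (X : ℝ → ℝ → ℝ → ℝ) (Y : ℝ → ℝ → ℝ)
    (hX : X = fun t x y => x - ε * deriv g t * y + ε^2 * g t * deriv g t)
    (hY : Y = fun t y => y - 2 * ε * g t)
    (u' ω' : ℝ → ℝ → ℝ → ℝ)
    (hu' : u' = fun t x y =>
      u t (X t x y) (Y t y) - ε * deriv (deriv g) t * y
        + ε^2 * g t * deriv (deriv g) t)
    (hω' : ω' = fun t x y =>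
      ω t (X t x y) (Y t y)
        - ε * (deriv g t * u t (X t x y) (Y t y)
            + deriv (deriv g) t * X t x y
            + (1/2) * deriv (deriv (deriv g)) t * (Y t y)^2)
        - ε^2 * g t * deriv (deriv (deriv g)) t * Y t y
        - (2/3) * ε^3 * (g t)^2 * deriv (deriv (deriv g)) t) :
    KPsystem u' ω' := by
  have h1g := contDiff_infty_iff_deriv.mp (hg.of_le (by simp))
  have h2g := contDiff_infty_iff_deriv.mp h1g.2
  have h3g := contDiff_infty_iff_deriv.mp h2g.2
  have Dg : ∀ s : ℝ, HasDerivAt g (deriv g s) s := fun s => (h1g.1 s).hasDerivAt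
  have Dg1 : ∀ s : ℝ, HasDerivAt (deriv g) (deriv (deriv g) s) s :=
    fun s => (h2g.1 s).hasDerivAt
  have Dg2 : ∀ s : ℝ, HasDerivAt (deriv (deriv g)) (deriv (deriv (deriv g)) s) s :=
    fun s => (h3g.1 s).hasDerivAt
  have hux : Smooth3 (px u) := smooth_px u hu
  have huxx : Smooth3 (px (px u)) := smooth_px _ hux
  -- function-level identity for px u'
  have H1 : px u' = fun a b c => px u a (X a b c) (Y a c) := by
    funext a b c
    rw [hu', hX, hY]
    simp only [px]
    have h : HasDerivAt (fun s => u a (s - ε * deriv g a * c + ε^2 * g a * deriv g a)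
        (c - 2 * ε * g a) - ε * deriv (deriv g) a * c + ε^2 * g a * deriv (deriv g) a) _ b :=
      ((hasDerivAt_comp3 u hu (hasDerivAt_const b a)
        (((hasDerivAt_id' (x := b)).sub_const _).add_const _)
        (hasDerivAt_const b _)).sub_const _).add_const _
    simpa [px] using h.deriv
  have H2 : px (px u') = fun a b c => px (px u) a (X a b c) (Y a c) := by
    rw [H1]
    funext a b c
    rw [hX, hY]
    simp only [px]
    have h : HasDerivAt (fun s => px u a (s - ε * deriv g a * c + ε^2 * g a * deriv g a)
        (c - 2 * ε * g a)) _ b :=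
      hasDerivAt_comp3 (px u) hux (hasDerivAt_const b a)
        (((hasDerivAt_id' (x := b)).sub_const _).add_const _) (hasDerivAt_const b _)
    simpa [px] using h.deriv
  intro t x y
  obtain ⟨e1, e2⟩ := hKP t (x - ε * deriv g t * y + ε^2 * g t * deriv g t) (y - 2 * ε * g t)
  have Epxxx : px (px (px u')) t x y
      = px (px (px u)) t (x - ε * deriv g t * y + ε^2 * g t * deriv g t) (y - 2 * ε * g t) := by
    rw [H2, hX, hY]
    simp only [px]
    have h : HasDerivAt (fun s => px (px u) t (s - ε * deriv g t * y + ε^2 * g t * deriv g t)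
        (y - 2 * ε * g t)) _ x :=
      hasDerivAt_comp3 (px (px u)) huxx (hasDerivAt_const x t)
        (((hasDerivAt_id' (x := x)).sub_const _).add_const _) (hasDerivAt_const x _)
    simpa [px] using h.deriv
  have Epx : px u' t x y
      = px u t (x - ε * deriv g t * y + ε^2 * g t * deriv g t) (y - 2 * ε * g t) := by
    rw [H1, hX, hY]
  have Ept : pt u' t x y
      = pt u t (x - ε * deriv g t * y + ε^2 * g t * deriv g t) (y - 2 * ε * g t)
        + (-(ε * deriv (deriv g) t * y) + ε^2 * (deriv g t * deriv g t + g t * deriv (deriv g) t))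
          * px u t (x - ε * deriv g t * y + ε^2 * g t * deriv g t) (y - 2 * ε * g t)
        + (-(2 * ε * deriv g t))
          * py u t (x - ε * deriv g t * y + ε^2 * g t * deriv g t) (y - 2 * ε * g t)
        - ε * deriv (deriv (deriv g)) t * y
        + ε^2 * (deriv g t * deriv (deriv g) t + g t * deriv (deriv (deriv g)) t) := by
    rw [hu', hX, hY]
    conv_lhs => simp only [pt]
    have h : HasDerivAt (fun s => u s (x - ε * deriv g s * y + ε^2 * g s * deriv g s)
        (y - 2 * ε * g s) - ε * deriv (deriv g) s * y + ε^2 * g s * deriv (deriv g) s) _ t :=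
      ((hasDerivAt_comp3 u hu (hasDerivAt_id' (x := t))
        (((hasDerivAt_const t x).sub (((Dg1 t).const_mul ε).mul_const y)).add
          (((Dg t).const_mul (ε^2)).mul (Dg1 t)))
        ((hasDerivAt_const t y).sub ((Dg t).const_mul (2 * ε)))).sub
          (((Dg2 t).const_mul ε).mul_const y)).add
        (((Dg t).const_mul (ε^2)).mul (Dg2 t))
    rw [h.deriv]; simp only [Pi.add_apply, Pi.sub_apply, Pi.mul_apply]; ring
  have Epy : py u' t x y
      = -(ε * deriv g t)
          * px u t (x - ε * deriv g t * y + ε^2 * g t * deriv g t) (y - 2 * ε * g t)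
        + py u t (x - ε * deriv g t * y + ε^2 * g t * deriv g t) (y - 2 * ε * g t)
        - ε * deriv (deriv g) t := by
    rw [hu', hX, hY]
    conv_lhs => simp only [py]
    have h : HasDerivAt (fun s => u t (x - ε * deriv g t * s + ε^2 * g t * deriv g t)
        (s - 2 * ε * g t) - ε * deriv (deriv g) t * s + ε^2 * g t * deriv (deriv g) t) _ y :=
      ((hasDerivAt_comp3 u hu (hasDerivAt_const y t)
        (((hasDerivAt_const y x).sub ((hasDerivAt_id' (x := y)).const_mul (ε * deriv g t))).add_const _)
        ((hasDerivAt_id' (x := y)).sub_const _)).sub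
          ((hasDerivAt_id' (x := y)).const_mul (ε * deriv (deriv g) t))).add_const _
    rw [h.deriv]; simp only [Pi.add_apply, Pi.sub_apply, Pi.mul_apply]; ring
  have Epxw : px ω' t x y
      = px ω t (x - ε * deriv g t * y + ε^2 * g t * deriv g t) (y - 2 * ε * g t)
        - ε * (deriv g t
            * px u t (x - ε * deriv g t * y + ε^2 * g t * deriv g t) (y - 2 * ε * g t)
          + deriv (deriv g) t) := by
    rw [hω', hX, hY]
    conv_lhs => simp only [px]
    have h : HasDerivAt (fun s =>
        ω t (s - ε * deriv g t * y + ε^2 * g t * deriv g t) (y - 2 * ε * g t)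
        - ε * (deriv g t * u t (s - ε * deriv g t * y + ε^2 * g t * deriv g t) (y - 2 * ε * g t)
            + deriv (deriv g) t * (s - ε * deriv g t * y + ε^2 * g t * deriv g t)
            + (1/2) * deriv (deriv (deriv g)) t * (y - 2 * ε * g t)^2)
        - ε^2 * g t * deriv (deriv (deriv g)) t * (y - 2 * ε * g t)
        - (2/3) * ε^3 * (g t)^2 * deriv (deriv (deriv g)) t) _ x :=
      (((hasDerivAt_comp3 ω hω (hasDerivAt_const x t)
        (((hasDerivAt_id' (x := x)).sub_const _).add_const _) (hasDerivAt_const x _)).sub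
        (((((hasDerivAt_comp3 u hu (hasDerivAt_const x t)
            (((hasDerivAt_id' (x := x)).sub_const _).add_const _)
            (hasDerivAt_const x _)).const_mul (deriv g t)).add
          ((((hasDerivAt_id' (x := x)).sub_const _).add_const _).const_mul (deriv (deriv g) t))).add
          (hasDerivAt_const x _)).const_mul ε)).sub_const _).sub_const _
    rw [h.deriv]; ring
  have Epyw : py ω' t x y
      = -(ε * deriv g t)
          * px ω t (x - ε * deriv g t * y + ε^2 * g t * deriv g t) (y - 2 * ε * g t)
        + py ω t (x - ε * deriv g t * y + ε^2 * g t * deriv g t) (y - 2 * ε * g t)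
        - ε * (deriv g t * (-(ε * deriv g t)
              * px u t (x - ε * deriv g t * y + ε^2 * g t * deriv g t) (y - 2 * ε * g t)
            + py u t (x - ε * deriv g t * y + ε^2 * g t * deriv g t) (y - 2 * ε * g t))
          + deriv (deriv g) t * (-(ε * deriv g t))
          + deriv (deriv (deriv g)) t * (y - 2 * ε * g t))
        - ε^2 * g t * deriv (deriv (deriv g)) t := by
    rw [hω', hX, hY]
    conv_lhs => simp only [py]
    have h : HasDerivAt (fun s =>
        ω t (x - ε * deriv g t * s + ε^2 * g t * deriv g t) (s - 2 * ε * g t)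
        - ε * (deriv g t * u t (x - ε * deriv g t * s + ε^2 * g t * deriv g t) (s - 2 * ε * g t)
            + deriv (deriv g) t * (x - ε * deriv g t * s + ε^2 * g t * deriv g t)
            + (1/2) * deriv (deriv (deriv g)) t * (s - 2 * ε * g t)^2)
        - ε^2 * g t * deriv (deriv (deriv g)) t * (s - 2 * ε * g t)
        - (2/3) * ε^3 * (g t)^2 * deriv (deriv (deriv g)) t) _ y :=
      (((hasDerivAt_comp3 ω hω (hasDerivAt_const y t)
        (((hasDerivAt_const y x).sub ((hasDerivAt_id' (x := y)).const_mul (ε * deriv g t))).add_const _)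
        ((hasDerivAt_id' (x := y)).sub_const _)).sub
        (((((hasDerivAt_comp3 u hu (hasDerivAt_const y t)
            (((hasDerivAt_const y x).sub
              ((hasDerivAt_id' (x := y)).const_mul (ε * deriv g t))).add_const _)
            ((hasDerivAt_id' (x := y)).sub_const _)).const_mul (deriv g t)).add
          ((((hasDerivAt_const y x).sub
              ((hasDerivAt_id' (x := y)).const_mul (ε * deriv g t))).add_const _).const_mul
            (deriv (deriv g) t))).add
          ((((hasDerivAt_id' (x := y)).sub_const _).pow 2).const_mul
            ((1/2) * deriv (deriv (deriv g)) t))).const_mul ε)).sub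
        (((hasDerivAt_id' (x := y)).sub_const _).const_mul
          (ε^2 * g t * deriv (deriv (deriv g)) t))).sub_const _
    rw [h.deriv]; simp only [Pi.add_apply, Pi.sub_apply, Pi.mul_apply]; ring
  refine ⟨?_, ?_⟩
  · rw [Ept, Epx, Epxxx, Epyw, hu', hX, hY]
    simp only
    linear_combination e1 + ε * deriv g t * e2
  · rw [Epxw, Epy]
    linear_combination e2
end
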